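/- arXiv:1209.4565 — 2 statements merged into one kernel-verified Lean document; each statement's English description precedes it below -/
import Mathlib

section
/- Let n ≥ 2. The maps x ↦ y(x) and y ↦ x(y) are mutually inverse birational maps: for every x = (x_2,…,x_{2n−1}) ∈ (ℂ^×)^{2n−2} with T_k(x) ≠ 0 for 1 ≤ k ≤ n−1 and U_k(y(x)) ≠ 0 for 1 ≤ k ≤ n−1, one has x(y(x)) = x; and for every y = (y_1,…,y_{2n−2}) ∈ (ℂ^×)^{2n−2} with U_k(y) ≠ 0 for 1 ≤ k ≤ n−1 and T_k(x(y)) ≠ 0 for 1 ≤ k ≤ n−1, one has y(x(y)) = y. -/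
noncomputable section

/-- `Tf n x k = ∑_{j=k+1}^{n} x_j / x_{n+j-1}` (so `Tf n x n = 0`). -/
def Tf (n : ℕ) (x : ℕ → ℂ) (k : ℕ) : ℂ :=
  ∑ j ∈ Finset.Icc (k + 1) n, x j / x (n + j - 1)

/-- `Uf n y k = y_1/y_n + ∑_{j=2}^{k} y_j / y_{n+j-1}` (so `Uf n y 1 = y_1/y_n`). -/
def Uf (n : ℕ) (y : ℕ → ℂ) (k : ℕ) : ℂ :=
  y 1 / y n + ∑ j ∈ Finset.Icc 2 k, y j / y (n + j - 1)

/-- The map `x ↦ y(x)`. -/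
def yOf (n : ℕ) (x : ℕ → ℂ) (k : ℕ) : ℂ :=
  if k = 1 then (Tf n x 1)⁻¹
  else if k ≤ n - 1 then x k * (Tf n x k)⁻¹
  else if k = n then (x n)⁻¹
  else (x k / x n) * Tf n x (k - n)

/-- The map `y ↦ x(y)`:
`x_k = (y_k/y_n)·U_k(y)⁻¹` for `2 ≤ k ≤ n-1`, `x_n = y_n⁻¹`,
`x_{n+l} = y_{n+l}·U_l(y)` for `1 ≤ l ≤ n-2`, `x_{2n-1} = U_{n-1}(y)`. -/
def xOf (n : ℕ) (y : ℕ → ℂ) (k : ℕ) : ℂ :=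
  if k ≤ n - 1 then (y k / y n) * (Uf n y k)⁻¹
  else if k = n then (y n)⁻¹
  else if k = 2 * n - 1 then Uf n y (n - 1)
  else y k * Uf n y (k - n)

/-!
Both compositions reduce to the identities `U_k(y(x)) = x_n / T_k(x)` and
`T_k(x(y)) = 1 / (y_n U_k(y))`, which telescope: since `x_{k+1} / x_{n+k} = T_k - T_{k+1}`,
the summand `y_{k+1} / y_{n+k}` of `U_{k+1}` at `y = y(x)` equals `x_n (1/T_{k+1} - 1/T_k)`, and
dually, since `y_{k+1} / y_{n+k} = U_{k+1} - U_k`, the summand of `T_k` at `x = x(y)` equals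
`(1/U_k - 1/U_{k+1}) / y_n`. So `U` is computed by induction upwards from `U_1`, and `T` by
induction downwards from `T_{n-1} = x_n / x_{2n-1}`.
-/

lemma yOf_one (n : ℕ) (x : ℕ → ℂ) : yOf n x 1 = (Tf n x 1)⁻¹ := if_pos rfl

lemma yOf_of_le {n k : ℕ} (x : ℕ → ℂ) (hk : 2 ≤ k) (hkn : k ≤ n - 1) :
    yOf n x k = x k * (Tf n x k)⁻¹ := by
  rw [yOf, if_neg (by omega), if_pos hkn]

lemma yOf_self {n : ℕ} (x : ℕ → ℂ) (hn : 2 ≤ n) : yOf n x n = (x n)⁻¹ := by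
  rw [yOf, if_neg (by omega), if_neg (by omega), if_pos rfl]

lemma yOf_of_lt {n k : ℕ} (x : ℕ → ℂ) (hn : 2 ≤ n) (hk : n < k) :
    yOf n x k = x k / x n * Tf n x (k - n) := by
  rw [yOf, if_neg (by omega), if_neg (by omega), if_neg (by omega)]

lemma xOf_of_le {n k : ℕ} (y : ℕ → ℂ) (hkn : k ≤ n - 1) :
    xOf n y k = y k / y n * (Uf n y k)⁻¹ := if_pos hkn

lemma xOf_self {n : ℕ} (y : ℕ → ℂ) (hn : 2 ≤ n) : xOf n y n = (y n)⁻¹ := by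
  rw [xOf, if_neg (by omega), if_pos rfl]

lemma xOf_two_mul_sub_one {n : ℕ} (y : ℕ → ℂ) (hn : 2 ≤ n) :
    xOf n y (2 * n - 1) = Uf n y (n - 1) := by
  rw [xOf, if_neg (by omega), if_neg (by omega), if_pos rfl]

lemma xOf_of_lt {n k : ℕ} (y : ℕ → ℂ) (hn : 2 ≤ n) (hk : n < k) (hk' : k ≤ 2 * n - 2) :
    xOf n y k = y k * Uf n y (k - n) := by
  rw [xOf, if_neg (by omega), if_neg (by omega), if_neg (by omega)]

lemma Tf_eq_add_Tf_succ {n k : ℕ} (x : ℕ → ℂ) (hk : k < n) :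
    Tf n x k = x (k + 1) / x (n + k) + Tf n x (k + 1) := by
  rw [Tf, Tf, ← Finset.insert_Icc_add_one_left_eq_Icc (by omega : k + 1 ≤ n),
    Finset.sum_insert (by simp), show n + (k + 1) - 1 = n + k by omega]

lemma Tf_sub_one {n : ℕ} (x : ℕ → ℂ) (hn : 2 ≤ n) :
    Tf n x (n - 1) = x n / x (2 * n - 1) := by
  rw [Tf, Nat.sub_add_cancel (by omega), Finset.Icc_self, Finset.sum_singleton,
    show n + n - 1 = 2 * n - 1 by omega]

lemma Uf_one (n : ℕ) (y : ℕ → ℂ) : Uf n y 1 = y 1 / y n := by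
  simp [Uf]

lemma Uf_succ {n k : ℕ} (y : ℕ → ℂ) (hk : 1 ≤ k) :
    Uf n y (k + 1) = Uf n y k + y (k + 1) / y (n + k) := by
  rw [Uf, Uf, Finset.sum_Icc_succ_top (by omega), ← add_assoc,
    show n + (k + 1) - 1 = n + k by omega]

lemma yOf_succ_div_yOf_add {n k : ℕ} (x : ℕ → ℂ) (hn : 2 ≤ n) (hk : 1 ≤ k)
    (hkn : k + 1 ≤ n - 1) (hxnk : x (n + k) ≠ 0)
    (hTk : Tf n x k ≠ 0) (hTk' : Tf n x (k + 1) ≠ 0) :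
    yOf n x (k + 1) / yOf n x (n + k) = x n * ((Tf n x (k + 1))⁻¹ - (Tf n x k)⁻¹) := by
  have hdiff : x (k + 1) = (Tf n x k - Tf n x (k + 1)) * x (n + k) := by
    rw [Tf_eq_add_Tf_succ x (by omega)]
    field_simp
    ring
  rw [yOf_of_le x (by omega) hkn, yOf_of_lt x hn (by omega), Nat.add_sub_cancel_left, hdiff]
  field_simp

lemma Uf_yOf {n k : ℕ} (hn : 2 ≤ n) (x : ℕ → ℂ)
    (hx : ∀ k, 2 ≤ k → k ≤ 2 * n - 1 → x k ≠ 0)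
    (hT : ∀ k, 1 ≤ k → k ≤ n - 1 → Tf n x k ≠ 0) (hk : 1 ≤ k) (hkn : k ≤ n - 1) :
    Uf n (yOf n x) k = x n / Tf n x k := by
  induction k, hk using Nat.le_induction with
  | base => rw [Uf_one, yOf_one, yOf_self x hn, div_inv_eq_mul, inv_mul_eq_div]
  | succ k hk ih =>
    rw [Uf_succ _ hk, ih (by omega), yOf_succ_div_yOf_add x hn hk hkn
      (hx (n + k) (by omega) (by omega)) (hT k hk (by omega)) (hT (k + 1) (by omega) hkn)]
    ring

lemma xOf_succ_div_xOf_add {n k : ℕ} (y : ℕ → ℂ) (hn : 2 ≤ n) (hk : 1 ≤ k)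
    (hkn : k + 1 ≤ n - 1) (hynk : y (n + k) ≠ 0)
    (hUk : Uf n y k ≠ 0) (hUk' : Uf n y (k + 1) ≠ 0) :
    xOf n y (k + 1) / xOf n y (n + k) = (y n)⁻¹ * ((Uf n y k)⁻¹ - (Uf n y (k + 1))⁻¹) := by
  have hdiff : y (k + 1) = (Uf n y (k + 1) - Uf n y k) * y (n + k) := by
    rw [Uf_succ y hk]
    field_simp
    ring
  rw [xOf_of_le y hkn, xOf_of_lt y hn (by omega) (by omega), Nat.add_sub_cancel_left, hdiff]
  field_simp

lemma Tf_xOf {n k : ℕ} (hn : 2 ≤ n) (y : ℕ → ℂ)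
    (hy : ∀ k, 1 ≤ k → k ≤ 2 * n - 2 → y k ≠ 0)
    (hU : ∀ k, 1 ≤ k → k ≤ n - 1 → Uf n y k ≠ 0) (hk : 1 ≤ k) (hkn : k ≤ n - 1) :
    Tf n (xOf n y) k = (y n * Uf n y k)⁻¹ := by
  induction hkn using Nat.decreasingInduction with
  | self => rw [Tf_sub_one _ hn, xOf_self y hn, xOf_two_mul_sub_one y hn, mul_inv, div_eq_mul_inv]
  | of_succ k hkn ih =>
    rw [Tf_eq_add_Tf_succ _ (by omega), ih (by omega), xOf_succ_div_xOf_add y hn hk hkn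
      (hy (n + k) (by omega) (by omega)) (hU k hk (by omega)) (hU (k + 1) (by omega) hkn)]
    ring

lemma xOf_yOf {n k : ℕ} (hn : 2 ≤ n) (x : ℕ → ℂ)
    (hx : ∀ k, 2 ≤ k → k ≤ 2 * n - 1 → x k ≠ 0)
    (hT : ∀ k, 1 ≤ k → k ≤ n - 1 → Tf n x k ≠ 0) (hk : 2 ≤ k) (hkn : k ≤ 2 * n - 1) :
    xOf n (yOf n x) k = x k := by
  have hxn := hx n hn (by omega)
  obtain hk' | rfl | hk' := lt_trichotomy k n
  · rw [xOf_of_le _ (by omega), yOf_of_le x hk (by omega), yOf_self x hn,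
      Uf_yOf hn x hx hT (by omega) (by omega)]
    have := hT k (by omega) (by omega)
    field_simp
  · rw [xOf_self _ hn, yOf_self x hn, inv_inv]
  obtain rfl | hk'' := eq_or_lt_of_le hkn
  · rw [xOf_two_mul_sub_one _ hn, Uf_yOf hn x hx hT (by omega) le_rfl, Tf_sub_one x hn]
    have := hx (2 * n - 1) (by omega) le_rfl
    field_simp
  · rw [xOf_of_lt _ hn hk' (by omega), yOf_of_lt x hn hk',
      Uf_yOf hn x hx hT (by omega) (by omega)]
    have := hT (k - n) (by omega) (by omega)
    field_simp

lemma yOf_xOf {n k : ℕ} (hn : 2 ≤ n) (y : ℕ → ℂ)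
    (hy : ∀ k, 1 ≤ k → k ≤ 2 * n - 2 → y k ≠ 0)
    (hU : ∀ k, 1 ≤ k → k ≤ n - 1 → Uf n y k ≠ 0) (hk : 1 ≤ k) (hkn : k ≤ 2 * n - 2) :
    yOf n (xOf n y) k = y k := by
  have hyn := hy n (by omega) (by omega)
  obtain rfl | hk := eq_or_lt_of_le hk
  · rw [yOf_one, Tf_xOf hn y hy hU le_rfl (by omega), inv_inv, Uf_one]
    field_simp
  obtain hk' | rfl | hk' := lt_trichotomy k n
  · rw [yOf_of_le _ hk (by omega), xOf_of_le y (by omega), Tf_xOf hn y hy hU (by omega) (by omega),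
      inv_inv]
    have := hU k (by omega) (by omega)
    field_simp
  · rw [yOf_self _ hn, xOf_self y hn, inv_inv]
  · rw [yOf_of_lt _ hn hk', xOf_of_lt y hn hk' hkn, xOf_self y hn,
      Tf_xOf hn y hy hU (by omega) (by omega)]
    have := hU (k - n) (by omega) (by omega)
    field_simp

/-- `x ↦ y(x)` and `y ↦ x(y)` are mutually inverse birational maps. -/
theorem stmt2 (n : ℕ) (hn : 2 ≤ n) :
    (∀ x : ℕ → ℂ, (∀ k, 2 ≤ k → k ≤ 2 * n - 1 → x k ≠ 0) →
      (∀ k, 1 ≤ k → k ≤ n - 1 → Tf n x k ≠ 0) →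
      (∀ k, 1 ≤ k → k ≤ n - 1 → Uf n (yOf n x) k ≠ 0) →
      ∀ k, 2 ≤ k → k ≤ 2 * n - 1 → xOf n (yOf n x) k = x k) ∧
    (∀ y : ℕ → ℂ, (∀ k, 1 ≤ k → k ≤ 2 * n - 2 → y k ≠ 0) →
      (∀ k, 1 ≤ k → k ≤ n - 1 → Uf n y k ≠ 0) →
      (∀ k, 1 ≤ k → k ≤ n - 1 → Tf n (xOf n y) k ≠ 0) →
      ∀ k, 1 ≤ k → k ≤ 2 * n - 2 → yOf n (xOf n y) k = y k) :=
  ⟨fun x hx hT _ _ hk hkn => xOf_yOf hn x hx hT hk hkn,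
    fun y hy hU _ _ hk hkn => yOf_xOf hn y hy hU hk hkn⟩
end
end

section
/- Let n ≥ 2, c ∈ ℂ^×, and let x = (x_2,…,x_{2n−1}) be nonzero complex numbers such that all denominators occurring below are nonzero. Then γ_1(e_0^c(x)) = c^{−1}·γ_1(x), γ_n(e_0^c(x)) = c^{−1}·γ_n(x), and γ_i(e_0^c(x)) = γ_i(x) for 2 ≤ i ≤ n−1. -/
/-!
For `1 ≤ k ≤ n` put `D_k = c S_k + T_k`, so `D_1 = S` and `D_n = c S`. On this whole range
`e_0^c` multiplies `x_k` by `S / D_k` and `x_{n+k}` by `D_k / (c S)` (at `k = n` resp. `k = 1`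
this is the middle branch `x ↦ x / c`), hence divides every product `x_k x_{n+k}` by `c`.
For `2 ≤ i ≤ n - 1`, `γ_i` is a ratio of such products of total degree zero, while `γ_1` and
`γ_n` each contain one unpaired factor, `x_{n+1}` resp. `x_n`, which is divided by `c` as well.
-/

noncomputable section

/-- `Sf n x k = ∑_{j=2}^{k} x_j / x_{n+j-1}` (so `Sf n x 1 = 0`, `S(x) = Sf n x n`). -/
def Sf (n : ℕ) (x : ℕ → ℂ) (k : ℕ) : ℂ :=
  ∑ j ∈ Finset.Icc 2 k, x j / x (n + j - 1)

/-- The rational map `e_0^c`. -/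
def e0M (n : ℕ) (c : ℂ) (x : ℕ → ℂ) (k : ℕ) : ℂ :=
  if k ≤ n - 1 then x k * Sf n x n / (c * Sf n x k + Tf n x k)
  else if k ≤ n + 1 then x k / c
  else x k * (c * Sf n x (k - n) + Tf n x (k - n)) / (c * Sf n x n)

/-- The functions `γ_i` for `1 ≤ i ≤ n` (conventions `x_1 = x_{2n} = 1`). -/
def gam (n : ℕ) (x : ℕ → ℂ) (i : ℕ) : ℂ :=
  if i = 1 then x (n + 1) ^ 2 / (x 2 * x (n + 2))
  else if i = n then x n ^ 2 / (x (n - 1) * x (2 * n - 1))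
  else x i ^ 2 * x (n + i) ^ 2 / (x (i - 1) * x (i + 1) * x (n + i - 1) * x (n + i + 1))

section Transform

variable {n : ℕ} {c : ℂ} {x : ℕ → ℂ}

lemma Sf_one : Sf n x 1 = 0 := by
  rw [Sf, Finset.Icc_eq_empty (by omega), Finset.sum_empty]

lemma Tf_self : Tf n x n = 0 := by
  rw [Tf, Finset.Icc_eq_empty (by omega), Finset.sum_empty]

lemma Tf_one : Tf n x 1 = Sf n x n := rfl

lemma e0M_of_lt_of_le {k : ℕ} (h1 : n - 1 < k) (h2 : k ≤ n + 1) : e0M n c x k = x k / c := by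
  rw [e0M, if_neg (by omega), if_pos h2]

variable (hc : c ≠ 0) (hS : Sf n x n ≠ 0)
include hc hS

lemma e0M_of_le {k : ℕ} (h1 : 1 ≤ k) (h2 : k ≤ n) :
    e0M n c x k = x k * Sf n x n / (c * Sf n x k + Tf n x k) := by
  rcases h2.lt_or_eq with hk | rfl
  · rw [e0M, if_pos (by omega)]
  · rw [e0M_of_lt_of_le (by omega) (by omega), Tf_self, add_zero]
    field_simp

lemma e0M_add_of_le {k : ℕ} (h1 : 1 ≤ k) :
    e0M n c x (n + k) = x (n + k) * (c * Sf n x k + Tf n x k) / (c * Sf n x n) := by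
  rcases h1.lt_or_eq with hk | rfl
  · rw [e0M, if_neg (by omega), if_neg (by omega), Nat.add_sub_cancel_left]
  · rw [e0M_of_lt_of_le (by omega) le_rfl, Sf_one, mul_zero, zero_add, Tf_one]
    field_simp

lemma c_mul_Sf_add_Tf_ne_zero (hden : ∀ k, 2 ≤ k → k ≤ n - 1 → c * Sf n x k + Tf n x k ≠ 0)
    {k : ℕ} (h1 : 1 ≤ k) (h2 : k ≤ n) : c * Sf n x k + Tf n x k ≠ 0 := by
  rcases h1.lt_or_eq with h1 | rfl
  · rcases h2.lt_or_eq with h2 | rfl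
    · exact hden k h1 (by omega)
    · simpa [Tf_self] using ⟨hc, hS⟩
  · simpa [Sf_one, Tf_one] using hS

lemma e0M_mul_e0M_add (hden : ∀ k, 2 ≤ k → k ≤ n - 1 → c * Sf n x k + Tf n x k ≠ 0)
    {k : ℕ} (h1 : 1 ≤ k) (h2 : k ≤ n) :
    e0M n c x k * e0M n c x (n + k) = x k * x (n + k) / c := by
  have hD := c_mul_Sf_add_Tf_ne_zero hc hS hden h1 h2
  rw [e0M_of_le hc hS h1 h2, e0M_add_of_le hc hS h1]
  field_simp

end Transform

section Gamma

variable {n : ℕ} {c : ℂ} {x y : ℕ → ℂ}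
  (hmul : ∀ k, 1 ≤ k → k ≤ n → y k * y (n + k) = x k * x (n + k) / c)
include hmul

lemma gam_one_of_mul_eq (hn : 2 ≤ n) (hy : y (n + 1) = x (n + 1) / c) : gam n y 1 = c⁻¹ * gam n x 1 := by
  simp only [gam, if_pos, hy, hmul 2 one_le_two hn]
  field_simp

lemma gam_self_of_mul_eq (hn : 2 ≤ n) (hy : y n = x n / c) : gam n y n = c⁻¹ * gam n x n := by
  have hpred := hmul (n - 1) (by omega) (by omega)
  rw [show n + (n - 1) = 2 * n - 1 by omega] at hpred
  simp only [gam, if_neg (show n ≠ 1 by omega), if_pos, hy, hpred]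
  field_simp

lemma gam_of_mul_eq (hc : c ≠ 0) {i : ℕ} (h1 : 2 ≤ i) (h2 : i ≤ n - 1) :
    gam n y i = gam n x i := by
  have hfactor (z : ℕ → ℂ) : z (i - 1) * z (i + 1) * z (n + i - 1) * z (n + i + 1) =
      z (i - 1) * z (n + (i - 1)) * (z (i + 1) * z (n + (i + 1))) := by
    rw [show n + i - 1 = n + (i - 1) by omega, ← add_assoc]
    ring
  simp only [gam, if_neg (show i ≠ 1 by omega), if_neg (show i ≠ n by omega), hfactor,
    ← mul_pow, hmul i (by omega) (by omega), hmul (i - 1) (by omega) (by omega),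
    hmul (i + 1) (by omega) (by omega)]
  field_simp

end Gamma

theorem stmt7_general (n : ℕ) (hn : 2 ≤ n) (c : ℂ) (hc : c ≠ 0) (x : ℕ → ℂ)
    (hS : Sf n x n ≠ 0)
    (hden : ∀ k, 2 ≤ k → k ≤ n - 1 → c * Sf n x k + Tf n x k ≠ 0) :
    gam n (e0M n c x) 1 = c⁻¹ * gam n x 1 ∧
    gam n (e0M n c x) n = c⁻¹ * gam n x n ∧
    ∀ i, 2 ≤ i → i ≤ n - 1 → gam n (e0M n c x) i = gam n x i := by
  have hmul := fun k ↦ e0M_mul_e0M_add (k := k) hc hS hden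
  exact ⟨gam_one_of_mul_eq hmul hn (e0M_of_lt_of_le (by omega) le_rfl),
    gam_self_of_mul_eq hmul hn (e0M_of_lt_of_le (by omega) (by omega)),
    fun i ↦ gam_of_mul_eq hmul hc⟩

/-- `γ_1(e_0^c(x)) = c⁻¹·γ_1(x)`, `γ_n(e_0^c(x)) = c⁻¹·γ_n(x)`, and
`γ_i(e_0^c(x)) = γ_i(x)` for `2 ≤ i ≤ n-1`. -/
theorem stmt7 (n : ℕ) (hn : 2 ≤ n) (c : ℂ) (hc : c ≠ 0) (x : ℕ → ℂ)
    (hx : ∀ k, 2 ≤ k → k ≤ 2 * n - 1 → x k ≠ 0)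
    (hx1 : x 1 = 1) (hx2n : x (2 * n) = 1)
    (hS : Sf n x n ≠ 0)
    (hden : ∀ k, 2 ≤ k → k ≤ n - 1 → c * Sf n x k + Tf n x k ≠ 0) :
    gam n (e0M n c x) 1 = c⁻¹ * gam n x 1 ∧
    gam n (e0M n c x) n = c⁻¹ * gam n x n ∧
    ∀ i, 2 ≤ i → i ≤ n - 1 → gam n (e0M n c x) i = gam n x i :=
  stmt7_general n hn c hc x hS hden
end
end
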